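/- arXiv:1911.03548 — 4 statements merged into one kernel-verified Lean document; each statement's English description precedes it below -/
import Mathlib

section
/- Let M > 0, β > 0, η > 0, m ≥ 1 a positive integer. Define C = (1 + 128 M⁴ η²)/(1 + η β)² and D = 128 M⁴ η²/(1 + η β)². If η ≤ β/(128 M⁴), then C^m + D·C·(C^m − 1)/(C − 1) ≤ 1 (interpreting the fraction term as its limit m·D·C when C = 1, or assuming C ≠ 1). -/
theorem stmt_0 (M β η : ℝ) (hM : 0 < M) (hβ : 0 < β) (hη : 0 < η)
    (m : ℕ) (hm : 1 ≤ m)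
    (C D : ℝ)
    (hC : C = (1 + 128 * M ^ 4 * η ^ 2) / (1 + η * β) ^ 2)
    (hD : D = 128 * M ^ 4 * η ^ 2 / (1 + η * β) ^ 2)
    (hCne : C ≠ 1)
    (hstep : η ≤ β / (128 * M ^ 4)) :
    C ^ m + D * C * (C ^ m - 1) / (C - 1) ≤ 1 := by
  have hb : (0:ℝ) < (1 + η * β) ^ 2 := by positivity
  have hstep' : η * (128 * M ^ 4) ≤ β := (le_div_iff₀ (by positivity)).mp hstep
  have ha : 128 * M ^ 4 * η ^ 2 ≤ η * β := by nlinarith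
  have ha0 : (0:ℝ) ≤ 128 * M ^ 4 * η ^ 2 := by positivity
  have hC0 : 0 < C := by rw [hC]; positivity
  have hClt : C < 1 := by
    rw [hC, div_lt_one hb]
    nlinarith [mul_pos hη hβ]
  have hkey : D * C ≤ 1 - C := by
    rw [hC, hD, div_mul_div_comm, div_le_iff₀ (by positivity)]
    have heq : (1 - (1 + 128 * M ^ 4 * η ^ 2) / (1 + η * β) ^ 2) *
        ((1 + η * β) ^ 2 * (1 + η * β) ^ 2)
        = ((1 + η * β) ^ 2 - (1 + 128 * M ^ 4 * η ^ 2)) * (1 + η * β) ^ 2 := by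
      field_simp
    rw [heq]
    nlinarith [mul_pos hη hβ, sq_nonneg (η * β), mul_nonneg (mul_pos hη hβ).le (mul_pos hη hβ).le]
  have h1C : 0 < 1 - C := by linarith
  have hCm : C ^ m ≤ 1 := pow_le_one₀ hC0.le hClt.le
  have hq : (C ^ m - 1) / (C - 1) = (1 - C ^ m) / (1 - C) := by
    rw [← neg_div_neg_eq]; ring_nf
  have hX : D * C * (C ^ m - 1) / (C - 1) ≤ 1 - C ^ m := by
    rw [mul_div_assoc, hq, ← mul_div_assoc, div_le_iff₀ h1C]
    nlinarith [mul_le_mul_of_nonneg_right hkey (by linarith : (0:ℝ) ≤ 1 - C ^ m)]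
  linarith
end

section
/- Let Ω : ℝᵈ → ℝ be a β-strongly convex function and η > 0. Then the proximal operator prox_{ηΩ} is (1/(1+ηβ))-Lipschitz: for all u, w ∈ ℝᵈ, ‖prox_{ηΩ}(u) − prox_{ηΩ}(w)‖ ≤ ‖u − w‖/(1 + ηβ). -/
open Set

/-- Expansion identity for norms in an inner product space. -/
lemma combo_norm_sq {E : Type*} [NormedAddCommGroup E] [InnerProductSpace ℝ E]
    (v w : E) {a b : ℝ} (hab : a + b = 1) :
    ‖a • v + b • w‖ ^ 2 = a * ‖v‖ ^ 2 + b * ‖w‖ ^ 2 - a * b * ‖v - w‖ ^ 2 := by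
  have h1 : ‖a • v + b • w‖ ^ 2 = a ^ 2 * ‖v‖ ^ 2 + 2 * (a * b * inner ℝ v w) + b ^ 2 * ‖w‖ ^ 2 := by
    rw [norm_add_sq_real, norm_smul, norm_smul, real_inner_smul_left, real_inner_smul_right,
      mul_pow, mul_pow, Real.norm_eq_abs, Real.norm_eq_abs, sq_abs, sq_abs]
    ring
  have h2 : ‖v - w‖ ^ 2 = ‖v‖ ^ 2 - 2 * inner ℝ v w + ‖w‖ ^ 2 := norm_sub_sq_real v w
  have hb : b = 1 - a := by linarith
  subst hb
  rw [h1, h2]; ring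

/-- the proximal operator of a `β`-strongly convex function is
`1/(1+ηβ)`-Lipschitz. `prox u` is assumed to minimize
`w ↦ (1/2)‖w − u‖² + η Ω w`. -/
theorem stmt_4 {d : ℕ} (Ω : EuclideanSpace ℝ (Fin d) → ℝ)
    (β η : ℝ) (hβ : 0 < β) (hη : 0 < η)
    (hΩ : StrongConvexOn univ β Ω)
    (prox : EuclideanSpace ℝ (Fin d) → EuclideanSpace ℝ (Fin d))
    (hprox : ∀ u, IsMinOn (fun w => (1 / 2) * ‖w - u‖ ^ 2 + η * Ω w) univ (prox u)) :
    ∀ u w, ‖prox u - prox w‖ ≤ ‖u - w‖ / (1 + η * β) := by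
  intro u w
  set c : ℝ := 1 + η * β with hc
  have hcpos : 0 < c := by positivity
  -- the proximal objective
  set F : EuclideanSpace ℝ (Fin d) → EuclideanSpace ℝ (Fin d) → ℝ :=
    fun v z => (1 / 2) * ‖z - v‖ ^ 2 + η * Ω z with hF
  -- strong convexity of the objective with modulus c
  have hFconv : ∀ v x y : EuclideanSpace ℝ (Fin d), ∀ a b : ℝ, 0 ≤ a → 0 ≤ b → a + b = 1 →
      F v (a • x + b • y) ≤ a * F v x + b * F v y - a * b * (c / 2) * ‖x - y‖ ^ 2 := by
    intro v x y a b ha hb hab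
    have hΩ' := hΩ.2 (mem_univ x) (mem_univ y) ha hb hab
    simp only [smul_eq_mul] at hΩ'
    have hnorm : a • x + b • y - v = a • (x - v) + b • (y - v) := by
      rw [smul_sub, smul_sub]
      rw [show (a • x + b • y - v : EuclideanSpace ℝ (Fin d))
        = a • x + b • y - (a + b) • v by rw [hab, one_smul]]
      module
    have hsq : ‖a • x + b • y - v‖ ^ 2
        = a * ‖x - v‖ ^ 2 + b * ‖y - v‖ ^ 2 - a * b * ‖x - y‖ ^ 2 := by
      rw [hnorm, combo_norm_sq (x - v) (y - v) hab]
      congr 2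
      abel_nf
    simp only [hF]
    rw [hsq]
    have : η * Ω (a • x + b • y) ≤ η * (a * Ω x + b * Ω y - a * b * (β / 2 * ‖x - y‖ ^ 2)) :=
      mul_le_mul_of_nonneg_left hΩ' hη.le
    nlinarith [this]
  -- key lemma: value at minimizer improves by (c/2)‖·‖²
  have key : ∀ v q, F v (prox v) + (c / 2) * ‖q - prox v‖ ^ 2 ≤ F v q := by
    intro v q
    set p := prox v with hp
    set K : ℝ := ‖q - p‖ ^ 2 with hK
    have step : ∀ b : ℝ, 0 ≤ b → b < 1 → F v p + b * (c / 2) * K ≤ F v q := by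
      intro b hb hb1
      have ha : (0:ℝ) ≤ 1 - b := by linarith
      have h1b : 0 < 1 - b := by linarith
      have hmin : F v p ≤ F v ((1 - b) • q + b • p) := hprox v (mem_univ _)
      have hconv := hFconv v q p (1 - b) b ha hb (by ring)
      have hcomb : F v p ≤ (1 - b) * F v q + b * F v p - (1 - b) * b * (c / 2) * K :=
        hmin.trans hconv
      have h3 : (1 - b) * (F v p + b * (c / 2) * K) ≤ (1 - b) * F v q := by nlinarith
      exact le_of_mul_le_mul_left (by linarith) h1b
    -- take the limit b → 1
    have tend : Filter.Tendsto (fun n : ℕ => F v p + (1 - 1 / (n + 1)) * (c / 2) * K)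
        Filter.atTop (nhds (F v p + (c / 2) * K)) := by
      have h0 : Filter.Tendsto (fun n : ℕ => 1 / ((n : ℝ) + 1)) Filter.atTop (nhds 0) :=
        tendsto_one_div_add_atTop_nhds_zero_nat
      have := ((tendsto_const_nhds (x := (1:ℝ)) (f := Filter.atTop (α := ℕ))).sub h0).mul_const
        ((c / 2) * K)
      simp only [sub_zero, one_mul] at this
      simpa [mul_assoc] using (tendsto_const_nhds (x := F v p)).add this
    refine le_of_tendsto tend (Filter.Eventually.of_forall fun n => ?_)
    refine step _ ?_ ?_
    · have : 1 / ((n : ℝ) + 1) ≤ 1 := by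
        rw [div_le_one (by positivity)]; linarith [Nat.cast_nonneg (α := ℝ) n]
      linarith
    · have : 0 < 1 / ((n : ℝ) + 1) := by positivity
      linarith
  -- combine the two inequalities
  obtain ⟨p, hp⟩ : ∃ p, p = prox u := ⟨_, rfl⟩
  obtain ⟨q, hq⟩ : ∃ q, q = prox w := ⟨_, rfl⟩
  have k1 := key u q
  have k2 := key w p
  rw [← hp] at k1
  rw [← hq] at k2
  rw [← hp, ← hq]
  simp only [hF] at k1 k2
  have hinner : (1 / 2) * ‖q - u‖ ^ 2 + (1 / 2) * ‖p - w‖ ^ 2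
      - (1 / 2) * ‖p - u‖ ^ 2 - (1 / 2) * ‖q - w‖ ^ 2 = inner ℝ (p - q) (u - w) := by
    rw [norm_sub_sq_real, norm_sub_sq_real, norm_sub_sq_real, norm_sub_sq_real]
    simp only [inner_sub_left, inner_sub_right]
    ring
  have hqp2 : ‖q - p‖ ^ 2 = ‖p - q‖ ^ 2 := by rw [norm_sub_rev]
  have hbound : c * ‖p - q‖ ^ 2 ≤ (inner ℝ (p - q) (u - w) : ℝ) := by
    rw [← hinner]
    have hc' : c * ‖p - q‖ ^ 2 = c / 2 * ‖p - q‖ ^ 2 + c / 2 * ‖p - q‖ ^ 2 := by ring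
    have hqp3 : c / 2 * ‖q - p‖ ^ 2 = c / 2 * ‖p - q‖ ^ 2 := by rw [hqp2]
    linarith [k1, k2, hqp3, hc']
  have hcs : (inner ℝ (p - q) (u - w) : ℝ) ≤ ‖p - q‖ * ‖u - w‖ := real_inner_le_norm _ _
  rw [le_div_iff₀ hcpos]
  rcases eq_or_ne p q with h | h
  · rw [h, sub_self, norm_zero, zero_mul]
    positivity
  · have hpq : 0 < ‖p - q‖ := by rw [norm_pos_iff, sub_ne_zero]; exact h
    have hh := hbound.trans hcs
    have h2 : (‖p - q‖ * c) * ‖p - q‖ ≤ ‖u - w‖ * ‖p - q‖ := by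
      have e1 : (‖p - q‖ * c) * ‖p - q‖ = c * ‖p - q‖ ^ 2 := by ring
      have e2 : ‖u - w‖ * ‖p - q‖ = ‖p - q‖ * ‖u - w‖ := by ring
      rw [e1, e2]; exact hh
    exact le_of_mul_le_mul_right h2 hpq
end

section
/- Let w, w' ∈ ℝᵈ, x ∈ ℝᵈ with ‖x‖ ≤ M, and p ∈ [0,1]. Then for the gradient map G(w; z) = ∂_w F(w, a(w), b(w), ζ(w); z) of the saddle-point AUC objective with squared loss, ‖G(w'; z) − G(w; z)‖ ≤ 8M²‖w' − w‖. In particular, taking the explicit form: ‖2(1−p)(wᵀx − w'ᵀx)x·1_{y=1} + 2p(wᵀx − w'ᵀx)x·1_{y=−1} + 2(p·1_{y=−1} − (1−p)·1_{y=1})(ζ(w) − ζ(w'))x‖ is bounded by 8M²‖w − w'‖ when a(w), b(w), ζ(w) are each linear in w with coefficient vectors of norm at most M (resp. 2M for ζ). -/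
set_option maxHeartbeats 800000


open scoped RealInnerProductSpace

/-- Lemma 2 of the paper: the explicit gradient difference of the
saddle-point AUC objective is bounded by `8M²‖w − w'‖`, when `‖x‖ ≤ M`,
`p ∈ [0,1]`, `y ∈ {1, −1}`, and `ζ(w) = ⟪c, w⟫` with `‖c‖ ≤ 2M`. -/
theorem stmt_15 {d : ℕ} (M p : ℝ) (hM : 0 < M)
    (hp0 : 0 ≤ p) (hp1 : p ≤ 1)
    (w w' x c : EuclideanSpace ℝ (Fin d))
    (hx : ‖x‖ ≤ M) (hc : ‖c‖ ≤ 2 * M)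
    (y : ℤ) (hy : y = 1 ∨ y = -1) :
    ‖(2 * (1 - p) * (⟪w, x⟫ - ⟪w', x⟫) * (if y = 1 then (1 : ℝ) else 0)) • x +
     (2 * p * (⟪w, x⟫ - ⟪w', x⟫) * (if y = -1 then (1 : ℝ) else 0)) • x +
     (2 * (p * (if y = -1 then (1 : ℝ) else 0) -
           (1 - p) * (if y = 1 then (1 : ℝ) else 0)) *
        (⟪c, w⟫ - ⟪c, w'⟫)) • x‖ ≤ 8 * M ^ 2 * ‖w - w'‖ := by
  have hx0 : (0:ℝ) ≤ ‖x‖ := norm_nonneg _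
  have hd0 : (0:ℝ) ≤ ‖w - w'‖ := norm_nonneg _
  have h1 : ⟪w, x⟫ - ⟪w', x⟫ = ⟪w - w', x⟫ := by rw [inner_sub_left]
  have h2 : ⟪c, w⟫ - ⟪c, w'⟫ = ⟪c, w - w'⟫ := by rw [inner_sub_right]
  have hA : |⟪w - w', x⟫| ≤ M * ‖w - w'‖ := by
    calc |⟪w - w', x⟫| ≤ ‖w - w'‖ * ‖x‖ := abs_real_inner_le_norm _ _
    _ ≤ ‖w - w'‖ * M := by nlinarith
    _ = M * ‖w - w'‖ := mul_comm _ _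
  have hB : |⟪c, w - w'⟫| ≤ 2 * M * ‖w - w'‖ := by
    calc |⟪c, w - w'⟫| ≤ ‖c‖ * ‖w - w'‖ := abs_real_inner_le_norm _ _
    _ ≤ 2 * M * ‖w - w'‖ := by nlinarith
  set e1 : ℝ := if y = 1 then (1:ℝ) else 0 with he1
  set e2 : ℝ := if y = -1 then (1:ℝ) else 0 with he2
  have he10 : 0 ≤ e1 := by rw [he1]; split <;> norm_num
  have he11 : e1 ≤ 1 := by rw [he1]; split <;> norm_num
  have he20 : 0 ≤ e2 := by rw [he2]; split <;> norm_num
  have he21 : e2 ≤ 1 := by rw [he2]; split <;> norm_num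
  rw [← add_smul, ← add_smul, norm_smul, Real.norm_eq_abs, h1, h2]
  have hab := abs_le.mp hA
  have hbb := abs_le.mp hB
  have ht1 : |2 * (1 - p) * ⟪w - w', x⟫ * e1| ≤ 2 * (M * ‖w - w'‖) := by
    rw [abs_mul, abs_mul, abs_of_nonneg (by nlinarith : (0:ℝ) ≤ 2 * (1 - p)),
      abs_of_nonneg he10]
    have h1 : (2 * (1 - p)) * |⟪w - w', x⟫| * e1 ≤ (2 * (1 - p)) * |⟪w - w', x⟫| :=
      mul_le_of_le_one_right (mul_nonneg (by linarith) (abs_nonneg _)) he11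
    have h2 : (2 * (1 - p)) * |⟪w - w', x⟫| ≤ 2 * |⟪w - w', x⟫| := by
      nlinarith [abs_nonneg (⟪w - w', x⟫)]
    linarith
  have ht2 : |2 * p * ⟪w - w', x⟫ * e2| ≤ 2 * (M * ‖w - w'‖) := by
    rw [abs_mul, abs_mul, abs_of_nonneg (by nlinarith : (0:ℝ) ≤ 2 * p),
      abs_of_nonneg he20]
    have h1 : (2 * p) * |⟪w - w', x⟫| * e2 ≤ (2 * p) * |⟪w - w', x⟫| :=
      mul_le_of_le_one_right (mul_nonneg (by linarith) (abs_nonneg _)) he21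
    have h2 : (2 * p) * |⟪w - w', x⟫| ≤ 2 * |⟪w - w', x⟫| := by
      nlinarith [abs_nonneg (⟪w - w', x⟫)]
    linarith
  have hm : |p * e2 - (1 - p) * e1| ≤ 1 :=
    abs_le.mpr ⟨by nlinarith, by nlinarith⟩
  have ht3 : |2 * (p * e2 - (1 - p) * e1) * ⟪c, w - w'⟫| ≤ 2 * (2 * M * ‖w - w'‖) := by
    rw [abs_mul, abs_mul, abs_two]
    nlinarith [abs_nonneg (p * e2 - (1 - p) * e1), abs_nonneg (⟪c, w - w'⟫)]
  have key : |2 * (1 - p) * ⟪w - w', x⟫ * e1 + 2 * p * ⟪w - w', x⟫ * e2 +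
      2 * (p * e2 - (1 - p) * e1) * ⟪c, w - w'⟫| ≤ 8 * M * ‖w - w'‖ := by
    have := abs_add_le (2 * (1 - p) * ⟪w - w', x⟫ * e1 + 2 * p * ⟪w - w', x⟫ * e2)
      (2 * (p * e2 - (1 - p) * e1) * ⟪c, w - w'⟫)
    have := abs_add_le (2 * (1 - p) * ⟪w - w', x⟫ * e1) (2 * p * ⟪w - w', x⟫ * e2)
    linarith
  calc |2 * (1 - p) * ⟪w - w', x⟫ * e1 + 2 * p * ⟪w - w', x⟫ * e2 +
      2 * (p * e2 - (1 - p) * e1) * ⟪c, w - w'⟫| * ‖x‖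
      ≤ (8 * M * ‖w - w'‖) * ‖x‖ := mul_le_mul_of_nonneg_right key hx0
    _ ≤ 8 * M ^ 2 * ‖w - w'‖ := by nlinarith
end

section
/- Let Ω be β-strongly convex, f convex differentiable with L-Lipschitz gradient oracle satisfying: w_{t+1} = prox_{ηΩ}(w_t − η v_t), w* = prox_{ηΩ}(w* − η∇f(w*)), prox_{ηΩ} is 1/(1+ηβ)-Lipschitz, E[v_t | w_t] = ∇f(w_t), E‖v_t − ∇f(w*)‖² ≤ 2L²(‖w_t − w*‖² + ‖w̃ − w*‖²), and ⟨w_t − w*, ∇f(w_t) − ∇f(w*)⟩ ≥ 0. Then E‖w_{t+1} − w*‖² ≤ ((1 + 2L²η²)/(1+ηβ)²)·E‖w_t − w*‖² + (2L²η²/(1+ηβ)²)·E‖w̃ − w*‖². -/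
open MeasureTheory
open scoped RealInnerProductSpace

/-- the key one-step inequality in the proof of Theorem 1 of the
paper. With `w_{t+1} = prox_{ηΩ}(w_t − η v)`, `w* = prox_{ηΩ}(w* − η ∇f(w*))`,
a `1/(1+ηβ)`-Lipschitz prox, an unbiased variance-reduced gradient `v`
satisfying the variance bound, and monotonicity of `∇f`, one gets
`E‖w_{t+1} − w*‖² ≤ ((1+2L²η²)/(1+ηβ)²)‖w_t − w*‖²
  + (2L²η²/(1+ηβ)²)‖w̃ − w*‖²`. -/
theorem stmt_18 {d : ℕ} {Ωm : Type*} [MeasurableSpace Ωm] (μ : Measure Ωm)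
    [IsProbabilityMeasure μ] (L η β : ℝ) (hL : 0 < L) (hη : 0 < η) (hβ : 0 < β)
    (f' prox : EuclideanSpace ℝ (Fin d) → EuclideanSpace ℝ (Fin d))
    (wt wtilde wstar : EuclideanSpace ℝ (Fin d))
    (v : Ωm → EuclideanSpace ℝ (Fin d)) (hv2 : MemLp v 2 μ)
    (wnext : Ωm → EuclideanSpace ℝ (Fin d))
    (hnext : ∀ ω, wnext ω = prox (wt - η • v ω))
    (hfix : wstar = prox (wstar - η • f' wstar))
    (hprox : ∀ u u', ‖prox u - prox u'‖ ≤ ‖u - u'‖ / (1 + η * β))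
    (hmean : ∫ ω, v ω ∂μ = f' wt)
    (hvar : ∫ ω, ‖v ω - f' wstar‖ ^ 2 ∂μ ≤
        2 * L ^ 2 * (‖wt - wstar‖ ^ 2 + ‖wtilde - wstar‖ ^ 2))
    (hmono : 0 ≤ ⟪wt - wstar, f' wt - f' wstar⟫) :
    ∫ ω, ‖wnext ω - wstar‖ ^ 2 ∂μ ≤
      ((1 + 2 * L ^ 2 * η ^ 2) / (1 + η * β) ^ 2) * ‖wt - wstar‖ ^ 2 +
      (2 * L ^ 2 * η ^ 2 / (1 + η * β) ^ 2) * ‖wtilde - wstar‖ ^ 2 := by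
  have hc : (0:ℝ) < 1 + η * β := by positivity
  set u : EuclideanSpace ℝ (Fin d) := wt - wstar with hu
  set F : Ωm → EuclideanSpace ℝ (Fin d) := fun ω => v ω - f' wstar with hF
  have hF2 : MemLp F 2 μ := hv2.sub (memLp_const _)
  have hFint : Integrable F μ := hF2.integrable one_le_two
  have hFsq : Integrable (fun ω => ‖F ω‖ ^ 2) μ :=
    (memLp_two_iff_integrable_sq_norm hF2.aestronglyMeasurable).mp hF2
  have hFinn : Integrable (fun ω => ⟪u, F ω⟫) μ := hFint.const_inner u
  -- pointwise bound
  have hpt : ∀ ω, ‖wnext ω - wstar‖ ^ 2 ≤ ‖u - η • F ω‖ ^ 2 / (1 + η * β) ^ 2 := by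
    intro ω
    have h1 : ‖wnext ω - wstar‖ ≤ ‖u - η • F ω‖ / (1 + η * β) := by
      have := hprox (wt - η • v ω) (wstar - η • f' wstar)
      rw [hnext ω]
      nth_rewrite 1 [hfix]
      convert this using 3
      simp only [hu, hF]
      rw [smul_sub]
      abel
    calc ‖wnext ω - wstar‖ ^ 2 ≤ (‖u - η • F ω‖ / (1 + η * β)) ^ 2 := by
          exact pow_le_pow_left₀ (norm_nonneg _) h1 2
      _ = ‖u - η • F ω‖ ^ 2 / (1 + η * β) ^ 2 := div_pow _ _ 2
  -- integrable majorant
  have hg : Integrable (fun ω => ‖u - η • F ω‖ ^ 2 / (1 + η * β) ^ 2) μ := by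
    have h2 : MemLp (fun ω => u - η • F ω) 2 μ :=
      (memLp_const u).sub (hF2.const_smul η)
    exact ((memLp_two_iff_integrable_sq_norm h2.aestronglyMeasurable).mp h2).div_const _
  have hmono' : ∫ ω, ‖wnext ω - wstar‖ ^ 2 ∂μ ≤
      ∫ ω, ‖u - η • F ω‖ ^ 2 / (1 + η * β) ^ 2 ∂μ := by
    refine integral_mono_of_nonneg ?_ hg ?_
    · filter_upwards with ω; positivity
    · filter_upwards with ω; exact hpt ω
  refine hmono'.trans ?_
  -- compute the integral
  have hexp : ∀ ω, ‖u - η • F ω‖ ^ 2 =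
      ‖u‖ ^ 2 - 2 * η * ⟪u, F ω⟫ + η ^ 2 * ‖F ω‖ ^ 2 := by
    intro ω
    rw [norm_sub_sq_real, real_inner_smul_right, norm_smul]
    simp [abs_of_pos hη]
    ring
  have hIF : ∫ ω, F ω ∂μ = f' wt - f' wstar := by
    rw [hF, integral_sub (hv2.integrable one_le_two) (integrable_const _), hmean,
      integral_const]
    simp
  have hIinn : ∫ ω, ⟪u, F ω⟫ ∂μ = ⟪u, f' wt - f' wstar⟫ := by
    rw [← hIF]; exact integral_inner hFint u
  have key : ∫ ω, ‖u - η • F ω‖ ^ 2 / (1 + η * β) ^ 2 ∂μ =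
      (‖u‖ ^ 2 - 2 * η * ⟪u, f' wt - f' wstar⟫ + η ^ 2 * ∫ ω, ‖F ω‖ ^ 2 ∂μ)
        / (1 + η * β) ^ 2 := by
    rw [integral_div]
    congr 1
    simp_rw [hexp]
    rw [integral_add (by exact (integrable_const _).sub (hFinn.const_mul _))
        (hFsq.const_mul _), integral_sub (integrable_const _) (hFinn.const_mul _),
      integral_const, integral_const_mul, integral_const_mul, hIinn]
    simp
  have hrhs : ((1 + 2 * L ^ 2 * η ^ 2) / (1 + η * β) ^ 2) * ‖u‖ ^ 2 +
      (2 * L ^ 2 * η ^ 2 / (1 + η * β) ^ 2) * ‖wtilde - wstar‖ ^ 2 =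
      ((1 + 2 * L ^ 2 * η ^ 2) * ‖u‖ ^ 2 + 2 * L ^ 2 * η ^ 2 * ‖wtilde - wstar‖ ^ 2)
        / (1 + η * β) ^ 2 := by ring
  rw [key, hrhs]
  have hIvar : ∫ ω, ‖F ω‖ ^ 2 ∂μ ≤ 2 * L ^ 2 * (‖u‖ ^ 2 + ‖wtilde - wstar‖ ^ 2) := hvar
  gcongr ?_ / _
  nlinarith [mul_nonneg (mul_nonneg (by norm_num : (0:ℝ) ≤ 2) hη.le) hmono, sq_nonneg η]
end
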